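/- Let K be a small monoidal triangulated category with associated big M∆C K̂, and let I_1 and I_2 be thick ideals of K. Then: (a) for all objects A, B of K, the object L_{I_1}(A) ⊗ L_{I_2}(B) lies in ⟨I_1, I_2⟩^⊥, i.e. Hom_{K̂}(C, L_{I_1}(A) ⊗ L_{I_2}(B)) = 0 for all C in the thick ideal ⟨I_1, I_2⟩ generated by I_1 and I_2; (b) if I_1 and I_2 are coprime, then L_{I_1}(A) ⊗ L_{I_2}(B) ≅ 0 for all objects A and B of K̂. -/

import Mathlib

/-!
Write `I^⊥` for the objects of the big category receiving no nonzero map from `F(I)`.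
Compact objects are rigid and their duals are again compact, and the zigzag identities make
`Z'` a retract of `(Z' ⊗ Z) ⊗ Z'` when `Z'` is dual to `Z`, so duals of objects of a thick
ideal `I` stay in `I`. Moving the dual across the `Hom` shows that `F Z ⊗ V` and `V ⊗ F Z`
receive no nonzero maps from compacts, hence vanish, for `Z ∈ I` and `V ∈ I^⊥`; it follows that `I^⊥` is a shift-closed
two-sided `⊗`-ideal of the big category. So `L_{I₁}A ⊗ L_{I₂}B ∈ I₁^⊥ ∩ I₂^⊥`, and the objects
of `K` left orthogonal to `I₁^⊥ ∩ I₂^⊥` form a thick ideal containing `I₁ ∪ I₂`, hence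
`⟨I₁, I₂⟩`. When `I₁, I₂` are coprime this is all of `K`, and compact generation forces
`L_{I₁}A ⊗ L_{I₂}B = 0`.
-/

open CategoryTheory Category Limits Pretriangulated ZeroObject MonoidalCategory

universe w v u v' u' v2 u2

namespace NVY

section SmallDefs

variable (C : Type u) [Category.{v} C] [HasZeroObject C] [Preadditive C] [HasShift C ℤ]
  [∀ n : ℤ, (shiftFunctor C n).Additive] [Pretriangulated C] [MonoidalCategory C]

/-- A thick (triangulated, summand-closed) subcategory of `C`, given by its set of objects. -/
structure ThickSubcat where
  carrier : Set C
  zero_mem : (0 : C) ∈ carrier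
  iso_closed : ∀ {A B : C}, (A ≅ B) → A ∈ carrier → B ∈ carrier
  shift_mem : ∀ (A : C) (n : ℤ), A ∈ carrier → (A⟦n⟧ : C) ∈ carrier
  ext₂ : ∀ T ∈ distTriang C, T.obj₁ ∈ carrier → T.obj₃ ∈ carrier → T.obj₂ ∈ carrier
  summand_mem : ∀ (A X : C) (s : A ⟶ X) (r : X ⟶ A), s ≫ r = 𝟙 A → X ∈ carrier → A ∈ carrier

/-- A (two-sided) thick ideal of a monoidal triangulated category, given by its set of objects. -/
structure ThickIdeal where
  carrier : Set C
  zero_mem : (0 : C) ∈ carrier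
  iso_closed : ∀ {A B : C}, (A ≅ B) → A ∈ carrier → B ∈ carrier
  shift_mem : ∀ (A : C) (n : ℤ), A ∈ carrier → (A⟦n⟧ : C) ∈ carrier
  ext₂ : ∀ T ∈ distTriang C, T.obj₁ ∈ carrier → T.obj₃ ∈ carrier → T.obj₂ ∈ carrier
  summand_mem : ∀ (A X : C) (s : A ⟶ X) (r : X ⟶ A), s ≫ r = 𝟙 A → X ∈ carrier → A ∈ carrier
  tensor_right_mem : ∀ (A B : C), A ∈ carrier → (A ⊗ B) ∈ carrier
  tensor_left_mem : ∀ (A B : C), A ∈ carrier → (B ⊗ A) ∈ carrier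

/-- The smallest thick subcategory containing a set `S` of objects. -/
def thickSubcatGenerated (S : Set C) : ThickSubcat C where
  carrier := {A : C | ∀ T : ThickSubcat C, S ⊆ T.carrier → A ∈ T.carrier}
  zero_mem := fun T _ => T.zero_mem
  iso_closed := fun e hA T hS => T.iso_closed e (hA T hS)
  shift_mem := fun A n hA T hS => T.shift_mem A n (hA T hS)
  ext₂ := fun T hT h1 h3 I hS => I.ext₂ T hT (h1 I hS) (h3 I hS)
  summand_mem := fun A X s r hsr hX T hS => T.summand_mem A X s r hsr (hX T hS)

/-- The smallest thick ideal containing a set `S` of objects, `⟨S⟩`. -/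
def thickIdealGenerated (S : Set C) : ThickIdeal C where
  carrier := {A : C | ∀ I : ThickIdeal C, S ⊆ I.carrier → A ∈ I.carrier}
  zero_mem := fun I _ => I.zero_mem
  iso_closed := fun e hA I hS => I.iso_closed e (hA I hS)
  shift_mem := fun A n hA I hS => I.shift_mem A n (hA I hS)
  ext₂ := fun T hT h1 h3 I hS => I.ext₂ T hT (h1 I hS) (h3 I hS)
  summand_mem := fun A X s r hsr hX I hS => I.summand_mem A X s r hsr (hX I hS)
  tensor_right_mem := fun A B hA I hS => I.tensor_right_mem A B (hA I hS)
  tensor_left_mem := fun A B hA I hS => I.tensor_left_mem A B (hA I hS)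

/-- `G` generates `C` as a thick subcategory. -/
def GeneratesThick (G : C) : Prop :=
  ∀ T : ThickSubcat C, G ∈ T.carrier → ∀ A : C, A ∈ T.carrier

variable {C}

/-- A thick ideal is proper if it is not all of `C`. -/
def ThickIdeal.IsProper (I : ThickIdeal C) : Prop := I.carrier ≠ Set.univ

/-- The intersection of two thick ideals. -/
def ThickIdeal.inter (I J : ThickIdeal C) : ThickIdeal C where
  carrier := I.carrier ∩ J.carrier
  zero_mem := ⟨I.zero_mem, J.zero_mem⟩
  iso_closed := fun e hA => ⟨I.iso_closed e hA.1, J.iso_closed e hA.2⟩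
  shift_mem := fun A n hA => ⟨I.shift_mem A n hA.1, J.shift_mem A n hA.2⟩
  ext₂ := fun T hT h1 h3 => ⟨I.ext₂ T hT h1.1 h3.1, J.ext₂ T hT h1.2 h3.2⟩
  summand_mem := fun A X s r hsr hX =>
    ⟨I.summand_mem A X s r hsr hX.1, J.summand_mem A X s r hsr hX.2⟩
  tensor_right_mem := fun A B hA => ⟨I.tensor_right_mem A B hA.1, J.tensor_right_mem A B hA.2⟩
  tensor_left_mem := fun A B hA => ⟨I.tensor_left_mem A B hA.1, J.tensor_left_mem A B hA.2⟩

/-- The intersection of a family of thick ideals. -/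
def idealInter {ι : Type w} (I : ι → ThickIdeal C) : ThickIdeal C where
  carrier := {A : C | ∀ i : ι, A ∈ (I i).carrier}
  zero_mem := fun i => (I i).zero_mem
  iso_closed := fun e hA i => (I i).iso_closed e (hA i)
  shift_mem := fun A n hA i => (I i).shift_mem A n (hA i)
  ext₂ := fun T hT h1 h3 i => (I i).ext₂ T hT (h1 i) (h3 i)
  summand_mem := fun A X s r hsr hX i => (I i).summand_mem A X s r hsr (hX i)
  tensor_right_mem := fun A B hA i => (I i).tensor_right_mem A B (hA i)
  tensor_left_mem := fun A B hA i => (I i).tensor_left_mem A B (hA i)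

variable (C)

/-- Two thick ideals are coprime if together they generate the whole category. -/
def Coprime (I J : ThickIdeal C) : Prop :=
  (thickIdealGenerated C (I.carrier ∪ J.carrier)).carrier = Set.univ

/-- A proper thick ideal `P` is prime if `I ⊗ J ⊆ P` implies `I ⊆ P` or `J ⊆ P`. -/
def IsPrime (P : ThickIdeal C) : Prop :=
  P.carrier ≠ Set.univ ∧
    ∀ I J : ThickIdeal C, (∀ A ∈ I.carrier, ∀ B ∈ J.carrier, (A ⊗ B) ∈ P.carrier) →
      I.carrier ⊆ P.carrier ∨ J.carrier ⊆ P.carrier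

/-- A proper thick ideal `P` is completely prime if `A ⊗ B ∈ P` implies `A ∈ P` or `B ∈ P`. -/
def IsCompletelyPrime (P : ThickIdeal C) : Prop :=
  P.carrier ≠ Set.univ ∧ ∀ A B : C, (A ⊗ B) ∈ P.carrier → A ∈ P.carrier ∨ B ∈ P.carrier

/-- A maximal (proper) thick ideal. -/
def IsMaximal (M : ThickIdeal C) : Prop :=
  M.carrier ≠ Set.univ ∧
    ∀ I : ThickIdeal C, I.carrier ≠ Set.univ → M.carrier ⊆ I.carrier → I.carrier = M.carrier

/-- A thick ideal is semiprime if it is an intersection of prime thick ideals. -/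
def IsSemiprime (I : ThickIdeal C) : Prop :=
  ∃ S : Set (ThickIdeal C), (∀ P ∈ S, IsPrime C P) ∧
    I.carrier = {A : C | ∀ P ∈ S, A ∈ P.carrier}

/-- The noncommutative Balmer spectrum: the set of prime thick ideals. -/
def Spc := {P : ThickIdeal C // IsPrime C P}

/-- The Zariski topology on the Balmer spectrum: generated by the closed sets
`V(A) = {P : A ∉ P}`, i.e. by the open sets `{P : A ∈ P}`. -/
instance : TopologicalSpace (Spc C) :=
  TopologicalSpace.generateFrom {U : Set (Spc C) | ∃ A : C, U = {P : Spc C | A ∈ P.1.carrier}}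

/-- The universal support of an object. -/
def V (A : C) : Set (Spc C) := {P : Spc C | A ∉ P.1.carrier}

/-- The support of a thick ideal: `Φ(I) = ⋃_{A ∈ I} V(A)`. -/
def supp (I : ThickIdeal C) : Set (Spc C) := ⋃ A ∈ I.carrier, V C A

/-- The prime radical: the intersection of all prime thick ideals. -/
def primeRadical : Set C := {A : C | ∀ P : ThickIdeal C, IsPrime C P → A ∈ P.carrier}

/-- The completely prime radical: the intersection of all completely prime thick ideals. -/
def cpRadical : Set C := {A : C | ∀ P : ThickIdeal C, IsCompletelyPrime C P → A ∈ P.carrier}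

/-- Tensor powers of an object. -/
def tpow (A : C) : ℕ → C
  | 0 => 𝟙_ C
  | n + 1 => tpow A n ⊗ A

/-- The set of ⊗-nilpotent objects. -/
def nilpotents : Set C := {A : C | ∃ n : ℕ, IsZero (tpow C A n)}

/-- The ideal `Θ(S)`: the intersection of the primes not belonging to `S`. -/
def thetaIdeal (S : Set (Spc C)) : ThickIdeal C where
  carrier := {A : C | ∀ P : Spc C, P ∉ S → A ∈ P.1.carrier}
  zero_mem := fun P _ => P.1.zero_mem
  iso_closed := fun e hA P hP => P.1.iso_closed e (hA P hP)
  shift_mem := fun A n hA P hP => P.1.shift_mem A n (hA P hP)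
  ext₂ := fun T hT h1 h3 P hP => P.1.ext₂ T hT (h1 P hP) (h3 P hP)
  summand_mem := fun A X s r hsr hX P hP => P.1.summand_mem A X s r hsr (hX P hP)
  tensor_right_mem := fun A B hA P hP => P.1.tensor_right_mem A B (hA P hP)
  tensor_left_mem := fun A B hA P hP => P.1.tensor_left_mem A B (hA P hP)

/-- A Thomason subset: a union of closed subsets with quasicompact complements. -/
def IsThomason (S : Set (Spc C)) : Prop :=
  ∃ 𝒵 : Set (Set (Spc C)), (∀ Z ∈ 𝒵, IsClosed Z ∧ IsCompact Zᶜ) ∧ S = ⋃₀ 𝒵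

/-- The class of morphisms whose cone lies in the set `S`: inverting these gives the
Verdier quotient by the (thick) subcategory with objects `S`. -/
def coneW (S : Set C) : MorphismProperty C := fun X Y f =>
  ∃ (Z : C) (g : Y ⟶ Z) (h : Z ⟶ (X⟦(1 : ℤ)⟧ : C)),
    (Triangle.mk f g h ∈ distTriang C) ∧ Z ∈ S

variable {C} in
/-- The product `f · g := Σⁿ(f) ∘ g` on the (Tate) extended endomorphism ring
`⊕ₙ Hom(A, ΣⁿA)`. -/
def extMul {A : C} {m n : ℤ} (f : A ⟶ (A⟦m⟧ : C)) (g : A ⟶ (A⟦n⟧ : C)) :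
    A ⟶ (A⟦m + n⟧ : C) :=
  g ≫ (shiftFunctor C n).map f ≫ (shiftFunctorAdd C m n).inv.app A

variable {C} in
/-- The identity element, in degree `0`, of the extended endomorphism ring of `A`. -/
def unitEl (A : C) : A ⟶ (A⟦(0 : ℤ)⟧ : C) := (shiftFunctorZero C ℤ).inv.app A

end SmallDefs

section BigDefs

variable (C : Type u) [Category.{v} C]

/-- An object `X` is compact if `Hom(X, -)` preserves set-indexed coproducts. -/
def IsCompactObj (X : C) : Prop :=
  ∀ ι : Type v, Nonempty
    (PreservesColimitsOfShape (Discrete ι) (coyoneda.obj (Opposite.op X)))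

variable [HasZeroObject C] [Preadditive C] [HasShift C ℤ]
  [∀ n : ℤ, (shiftFunctor C n).Additive] [Pretriangulated C] [MonoidalCategory C]

/-- `C` is a compactly generated (big) monoidal triangulated category: it has set-indexed
coproducts preserved by the tensor product in each variable, the unit is compact, compacts
are closed under tensoring and rigid, and the compact objects generate. -/
structure IsCptGenMDC : Prop where
  hasCoproducts : HasCoproducts.{v} C
  tensorLeft_pres : ∀ (X : C) (ι : Type v),
    Nonempty (PreservesColimitsOfShape (Discrete ι) (tensorLeft X))
  tensorRight_pres : ∀ (X : C) (ι : Type v),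
    Nonempty (PreservesColimitsOfShape (Discrete ι) (tensorRight X))
  unit_compact : IsCompactObj C (𝟙_ C)
  tensor_compact : ∀ X Y : C, IsCompactObj C X → IsCompactObj C Y → IsCompactObj C (X ⊗ Y)
  compact_rigid_left : ∀ X : C, IsCompactObj C X → Nonempty (HasLeftDual X)
  compact_rigid_right : ∀ X : C, IsCompactObj C X → Nonempty (HasRightDual X)
  compactly_generated : ∀ X : C,
    (∀ G : C, IsCompactObj C G → ∀ (n : ℤ) (f : (G⟦n⟧ : C) ⟶ X), f = 0) → IsZero X

/-- A localizing subcategory: a triangulated subcategory closed under set-indexed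
coproducts. -/
structure LocalizingSubcat where
  carrier : Set C
  zero_mem : (0 : C) ∈ carrier
  iso_closed : ∀ {A B : C}, (A ≅ B) → A ∈ carrier → B ∈ carrier
  shift_mem : ∀ (A : C) (n : ℤ), A ∈ carrier → (A⟦n⟧ : C) ∈ carrier
  ext₂ : ∀ T ∈ distTriang C, T.obj₁ ∈ carrier → T.obj₃ ∈ carrier → T.obj₂ ∈ carrier
  coproduct_mem : ∀ {ι : Type v} (Y : ι → C) (c : Cofan Y), IsColimit c →
    (∀ i, Y i ∈ carrier) → c.pt ∈ carrier

/-- `Loc(S)`: the objects of the localizing subcategory generated by `S`. -/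
def locSet (S : Set C) : Set C :=
  {A : C | ∀ L : LocalizingSubcat C, S ⊆ L.carrier → A ∈ L.carrier}

/-- `Loc(S)^⊥`: objects receiving no nonzero morphism from `Loc(S)`. -/
def perpSet (S : Set C) : Set C :=
  {A : C | ∀ B ∈ locSet C S, ∀ f : B ⟶ A, f = 0}

/-- The localization/colocalization data associated to `S ⊆ C`: for each object `A`,
a distinguished triangle `Γ(A) → A → L(A) → ΣΓ(A)` with `Γ(A) ∈ Loc(S)` and
`L(A) ∈ Loc(S)^⊥`. -/
structure LocalizationData (S : Set C) where
  Γ : C → C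
  L : C → C
  Γ_mem : ∀ A : C, Γ A ∈ locSet C S
  L_mem : ∀ A : C, L A ∈ perpSet C S
  α : ∀ A : C, Γ A ⟶ A
  β : ∀ A : C, A ⟶ L A
  γ : ∀ A : C, L A ⟶ ((Γ A)⟦(1 : ℤ)⟧ : C)
  dist : ∀ A : C, Triangle.mk (α A) (β A) (γ A) ∈ distTriang C

variable {C}

/-- The iterated colocalization `Γ_{I_{σ(m)}} ⋯ Γ_{I_{σ(1)}}(𝟙)` of the unit object. -/
def gammaIter {n : ℕ} {S : Fin n → Set C} (LD : ∀ j, LocalizationData C (S j))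
    (σ : Equiv.Perm (Fin n)) : ℕ → C
  | 0 => 𝟙_ C
  | m + 1 =>
      if h : m < n then (LD (σ ⟨m, h⟩)).Γ (gammaIter LD σ m) else gammaIter LD σ m

end BigDefs

section Monoidal

variable {D : Type u2} [Category.{v2} D] [MonoidalCategory D]

def ExactPairing.retractLeft (X Y : D) [ExactPairing X Y] : Retract X ((X ⊗ Y) ⊗ X) where
  i := (λ_ X).inv ≫ η_ X Y ▷ X
  r := (α_ X Y X).hom ≫ X ◁ ε_ X Y ≫ (ρ_ X).hom

def ExactPairing.retractRight (X Y : D) [ExactPairing X Y] : Retract Y (Y ⊗ (X ⊗ Y)) where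
  i := (ρ_ Y).inv ≫ Y ◁ η_ X Y
  r := (α_ Y X Y).inv ≫ ε_ X Y ▷ Y ≫ (λ_ Y).hom

lemma isCompactObj_of_exactPairing_left (P X : D) [ExactPairing P X]
    (hX : ∀ ι : Type v2, Nonempty (PreservesColimitsOfShape (Discrete ι) (tensorRight X)))
    (hunit : IsCompactObj D (𝟙_ D)) : IsCompactObj D P := by
  intro ι
  obtain ⟨_⟩ := hX ι
  obtain ⟨_⟩ := hunit ι
  have e : coyoneda.obj (Opposite.op P) ≅ tensorRight X ⋙ coyoneda.obj (Opposite.op (𝟙_ D)) :=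
    coyoneda.mapIso (λ_ P).op ≪≫ (tensorRightAdjunction P X).compCoyonedaIso.app _
  exact ⟨preservesColimitsOfShape_of_natIso e.symm⟩

lemma isCompactObj_of_exactPairing_right (X P : D) [ExactPairing X P]
    (hX : ∀ ι : Type v2, Nonempty (PreservesColimitsOfShape (Discrete ι) (tensorLeft X)))
    (hunit : IsCompactObj D (𝟙_ D)) : IsCompactObj D P := by
  intro ι
  obtain ⟨_⟩ := hX ι
  obtain ⟨_⟩ := hunit ι
  have e : coyoneda.obj (Opposite.op P) ≅ tensorLeft X ⋙ coyoneda.obj (Opposite.op (𝟙_ D)) :=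
    coyoneda.mapIso (ρ_ P).op ≪≫ (tensorLeftAdjunction X P).compCoyonedaIso.app _
  exact ⟨preservesColimitsOfShape_of_natIso e.symm⟩

end Monoidal

noncomputable def Retract.preimage {D : Type u2} [Category.{v2} D] {E : Type*} [Category E]
    (G : D ⥤ E) [G.Full] [G.Faithful] {X Y : D} (h : Retract (G.obj X) (G.obj Y)) :
    Retract X Y where
  i := G.preimage h.i
  r := G.preimage h.r
  retract := G.map_injective (by simp)

section ThickIdeal

variable {K : Type u'} [Category.{v'} K] [HasZeroObject K] [Preadditive K] [HasShift K ℤ]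
  [∀ n : ℤ, (shiftFunctor K n).Additive] [Pretriangulated K] [MonoidalCategory K]

lemma thickIdealGenerated_le {S : Set K} {I : ThickIdeal K} (hS : S ⊆ I.carrier) :
    (thickIdealGenerated K S).carrier ⊆ I.carrier :=
  fun _ hZ => hZ I hS

lemma ThickIdeal.mem_of_retract (I : ThickIdeal K) {X Y : K} (h : Retract X Y)
    (hY : Y ∈ I.carrier) : X ∈ I.carrier :=
  I.summand_mem X Y h.i h.r h.retract hY

variable {D : Type u2} [Category.{v2} D] [MonoidalCategory D] (F : K ⥤ D) [F.Full] [F.Faithful]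
  [F.Monoidal] {I : ThickIdeal K} {Z Z' : K}

lemma ThickIdeal.mem_of_exactPairing_left [ExactPairing (F.obj Z') (F.obj Z)]
    (hZ : Z ∈ I.carrier) : Z' ∈ I.carrier :=
  I.mem_of_retract (Retract.preimage F ((ExactPairing.retractLeft _ _).trans (.ofIso
      (whiskerRightIso (Functor.Monoidal.μIso F Z' Z) _ ≪≫ Functor.Monoidal.μIso F _ _))))
    (I.tensor_right_mem _ Z' (I.tensor_left_mem Z Z' hZ))

lemma ThickIdeal.mem_of_exactPairing_right [ExactPairing (F.obj Z) (F.obj Z')]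
    (hZ : Z ∈ I.carrier) : Z' ∈ I.carrier :=
  I.mem_of_retract (Retract.preimage F ((ExactPairing.retractRight _ _).trans (.ofIso
      (whiskerLeftIso _ (Functor.Monoidal.μIso F Z Z') ≪≫ Functor.Monoidal.μIso F _ _))))
    (I.tensor_left_mem _ Z' (I.tensor_right_mem Z Z' hZ))

end ThickIdeal

section Duals

variable {C : Type u} [Category.{v} C] [Preadditive C] [HasShift C ℤ] [MonoidalCategory C]

lemma IsCptGenMDC.isZero_tensor_of_isZero_left (hC : IsCptGenMDC C) {X : C} (hX : IsZero X)
    (Y : C) : IsZero (X ⊗ Y) := by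
  obtain ⟨_⟩ := hC.tensorRight_pres Y PEmpty
  have : PreservesColimitsOfShape (Discrete PEmpty.{1}) (tensorRight Y) :=
    preservesColimitsOfShape_of_equiv emptyEquivalence _
  exact (hX.isInitial.isInitialObj (tensorRight Y)).isZero

lemma IsCptGenMDC.isZero_tensor_of_isZero_right (hC : IsCptGenMDC C) {X : C} (hX : IsZero X)
    (Y : C) : IsZero (Y ⊗ X) := by
  obtain ⟨_⟩ := hC.tensorLeft_pres Y PEmpty
  have : PreservesColimitsOfShape (Discrete PEmpty.{1}) (tensorLeft Y) :=
    preservesColimitsOfShape_of_equiv emptyEquivalence _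
  exact (hX.isInitial.isInitialObj (tensorLeft Y)).isZero

variable {K : Type u'} [Category.{v'} K] [HasZeroObject K] [Preadditive K] [HasShift K ℤ]
  [∀ n : ℤ, (shiftFunctor K n).Additive] [Pretriangulated K] [MonoidalCategory K]
  (F : K ⥤ C) [F.Full] [F.Faithful] [F.Monoidal]

lemma exists_exactPairing_left_mem (hC : IsCptGenMDC C)
    (hF : ∀ X : C, F.essImage X ↔ IsCompactObj C X) {I : ThickIdeal K} {Z : K}
    (hZ : Z ∈ I.carrier) : ∃ Z' ∈ I.carrier, Nonempty (ExactPairing (F.obj Z') (F.obj Z)) := by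
  obtain ⟨_⟩ := hC.compact_rigid_left (F.obj Z) ((hF _).mp (F.obj_mem_essImage Z))
  obtain ⟨Z', ⟨e⟩⟩ := (hF _).mpr (isCompactObj_of_exactPairing_left (ᘁ(F.obj Z)) (F.obj Z)
    (hC.tensorRight_pres _) hC.unit_compact)
  let := exactPairingCongrLeft (Y := F.obj Z) e
  exact ⟨Z', I.mem_of_exactPairing_left F hZ, ⟨this⟩⟩

lemma exists_exactPairing_right_mem (hC : IsCptGenMDC C)
    (hF : ∀ X : C, F.essImage X ↔ IsCompactObj C X) {I : ThickIdeal K} {Z : K}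
    (hZ : Z ∈ I.carrier) : ∃ Z' ∈ I.carrier, Nonempty (ExactPairing (F.obj Z) (F.obj Z')) := by
  obtain ⟨_⟩ := hC.compact_rigid_right (F.obj Z) ((hF _).mp (F.obj_mem_essImage Z))
  obtain ⟨Z', ⟨e⟩⟩ := (hF _).mpr (isCompactObj_of_exactPairing_right (F.obj Z) (F.obj Z)ᘁ
    (hC.tensorLeft_pres _) hC.unit_compact)
  let := exactPairingCongrRight (X := F.obj Z) e
  exact ⟨Z', I.mem_of_exactPairing_right F hZ, ⟨this⟩⟩

end Duals

section Shift

variable {C : Type u} [Category.{v} C] [HasShift C ℤ] {K : Type u'} [Category.{v'} K]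
  [HasShift K ℤ] (F : K ⥤ C) [F.CommShift ℤ]

def homObjShiftEquiv (Z : K) (V : C) {m n : ℤ} (h : m + n = 0) :
    (F.obj (Z⟦m⟧) ⟶ V) ≃ (F.obj Z ⟶ V⟦n⟧) :=
  ((F.commShiftIso m).app Z).homCongr (Iso.refl V) |>.trans
    ((shiftEquiv' C m n h).toAdjunction.homEquiv (F.obj Z) V)

lemma isZero_of_forall_subsingleton [Preadditive C] [MonoidalCategory C] (hC : IsCptGenMDC C)
    (hF : ∀ X : C, F.essImage X ↔ IsCompactObj C X) {X : C}
    (h : ∀ B : K, Subsingleton (F.obj B ⟶ X)) : IsZero X := by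
  refine hC.compactly_generated X fun G hG n f => ?_
  obtain ⟨B, ⟨e⟩⟩ := (hF G).mpr hG
  let e' : (G⟦n⟧ : C) ≅ F.obj (B⟦n⟧) :=
    (shiftFunctor C n).mapIso e.symm ≪≫ ((F.commShiftIso n).app B).symm
  have := h (B⟦n⟧)
  exact (e'.homCongr (Iso.refl X)).subsingleton.elim f 0

end Shift

section Orthogonal

variable {C : Type u} [Category.{v} C] {K : Type u'} [Category.{v'} K] [HasZeroObject K]
  [Preadditive K] [HasShift K ℤ] [∀ n : ℤ, (shiftFunctor K n).Additive] [Pretriangulated K]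
  [MonoidalCategory K] (F : K ⥤ C)

def rightOrthogonal (I : ThickIdeal K) : Set C :=
  {V | ∀ Z ∈ I.carrier, Subsingleton (F.obj Z ⟶ V)}

variable {F} {I : ThickIdeal K} [HasShift C ℤ] [F.CommShift ℤ]

lemma shift_mem_rightOrthogonal {V : C} (hV : V ∈ rightOrthogonal F I) (n : ℤ) :
    V⟦n⟧ ∈ rightOrthogonal F I := fun Z hZ =>
  have := hV _ (I.shift_mem Z (-n) hZ)
  (homObjShiftEquiv F Z V (neg_add_cancel n)).symm.subsingleton

variable [Preadditive C] [MonoidalCategory C] [F.Full] [F.Faithful] [F.Monoidal]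

lemma isZero_obj_tensor_of_mem_rightOrthogonal (hC : IsCptGenMDC C)
    (hF : ∀ X : C, F.essImage X ↔ IsCompactObj C X) {Z : K}
    (hZ : Z ∈ I.carrier) {V : C} (hV : V ∈ rightOrthogonal F I) : IsZero (F.obj Z ⊗ V) := by
  refine isZero_of_forall_subsingleton F hC hF fun B => ?_
  obtain ⟨Z', hZ', ⟨_⟩⟩ := exists_exactPairing_right_mem F hC hF hZ
  have := hV _ (I.tensor_right_mem Z' B hZ')
  exact ((tensorLeftHomEquiv _ _ _ V).symm.trans
    ((Functor.Monoidal.μIso F Z' B).homCongr (Iso.refl V))).subsingleton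

lemma isZero_tensor_obj_of_mem_rightOrthogonal (hC : IsCptGenMDC C)
    (hF : ∀ X : C, F.essImage X ↔ IsCompactObj C X) {Z : K}
    (hZ : Z ∈ I.carrier) {V : C} (hV : V ∈ rightOrthogonal F I) : IsZero (V ⊗ F.obj Z) := by
  refine isZero_of_forall_subsingleton F hC hF fun B => ?_
  obtain ⟨Z', hZ', ⟨_⟩⟩ := exists_exactPairing_left_mem F hC hF hZ
  have := hV _ (I.tensor_left_mem Z' B hZ')
  exact ((tensorRightHomEquiv _ _ _ V).symm.trans
    ((Functor.Monoidal.μIso F B Z').homCongr (Iso.refl V))).subsingleton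

lemma tensor_mem_rightOrthogonal_of_left (hC : IsCptGenMDC C)
    (hF : ∀ X : C, F.essImage X ↔ IsCompactObj C X) {V : C}
    (hV : V ∈ rightOrthogonal F I) (W : C) : V ⊗ W ∈ rightOrthogonal F I := fun Z hZ => by
  obtain ⟨Z', hZ', ⟨_⟩⟩ := exists_exactPairing_left_mem F hC hF hZ
  have hzero : IsZero (F.obj Z' ⊗ (V ⊗ W)) :=
    (hC.isZero_tensor_of_isZero_left
      (isZero_obj_tensor_of_mem_rightOrthogonal hC hF hZ' hV) W).of_iso (α_ _ _ _).symm
  have : Subsingleton (𝟙_ C ⟶ F.obj Z' ⊗ (V ⊗ W)) := ⟨hzero.eq_of_tgt⟩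
  exact (((ρ_ (F.obj Z)).symm.homCongr (Iso.refl _)).trans
    (tensorLeftHomEquiv (𝟙_ C) (F.obj Z') (F.obj Z) _)).subsingleton

lemma tensor_mem_rightOrthogonal_of_right (hC : IsCptGenMDC C)
    (hF : ∀ X : C, F.essImage X ↔ IsCompactObj C X) {V : C}
    (hV : V ∈ rightOrthogonal F I) (W : C) : W ⊗ V ∈ rightOrthogonal F I := fun Z hZ => by
  obtain ⟨Z', hZ', ⟨_⟩⟩ := exists_exactPairing_right_mem F hC hF hZ
  have hzero : IsZero ((W ⊗ V) ⊗ F.obj Z') :=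
    (hC.isZero_tensor_of_isZero_right
      (isZero_tensor_obj_of_mem_rightOrthogonal hC hF hZ' hV) W).of_iso (α_ _ _ _)
  have : Subsingleton (𝟙_ C ⟶ (W ⊗ V) ⊗ F.obj Z') := ⟨hzero.eq_of_tgt⟩
  exact (((λ_ (F.obj Z)).symm.homCongr (Iso.refl _)).trans
    (tensorRightHomEquiv (𝟙_ C) (F.obj Z) (F.obj Z') _)).subsingleton

end Orthogonal

section LeftOrthogonal

variable {C : Type u} [Category.{v} C] [HasZeroObject C] [Preadditive C] [HasShift C ℤ]
  [∀ n : ℤ, (shiftFunctor C n).Additive] [Pretriangulated C]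
variable {K : Type u'} [Category.{v'} K] [HasZeroObject K] [Preadditive K] [HasShift K ℤ]
  [∀ n : ℤ, (shiftFunctor K n).Additive] [Pretriangulated K] [MonoidalCategory K]

lemma perpSet_subset_rightOrthogonal (F : K ⥤ C) (I : ThickIdeal K) :
    perpSet C (F.obj '' I.carrier) ⊆ rightOrthogonal F I := fun _ hV Z hZ =>
  subsingleton_of_forall_eq 0 (hV _ fun _ hS => hS ⟨Z, hZ, rfl⟩)

variable [MonoidalCategory C]

def leftOrthogonalIdeal (hC : IsCptGenMDC C) (F : K ⥤ C) [F.CommShift ℤ] [F.IsTriangulated]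
    [F.Monoidal] (hF : ∀ X : C, F.essImage X ↔ IsCompactObj C X) (𝒲 : Set C)
    (h_shift : ∀ W ∈ 𝒲, ∀ n : ℤ, W⟦n⟧ ∈ 𝒲) (h_tensorRight : ∀ W ∈ 𝒲, ∀ E : C, W ⊗ E ∈ 𝒲)
    (h_tensorLeft : ∀ W ∈ 𝒲, ∀ E : C, E ⊗ W ∈ 𝒲) : ThickIdeal K where
  carrier := {Z | ∀ W ∈ 𝒲, Subsingleton (F.obj Z ⟶ W)}
  zero_mem _ _ := ⟨(F.map_isZero (isZero_zero K)).eq_of_src⟩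
  iso_closed e hA W hW :=
    have := hA W hW
    ((F.mapIso e).symm.homCongr (Iso.refl W)).subsingleton
  shift_mem Z n hZ W hW :=
    have := hZ _ (h_shift W hW (-n))
    (homObjShiftEquiv F Z W (add_neg_cancel n)).subsingleton
  ext₂ T hT h₁ h₃ W hW := by
    have : Subsingleton ((F.mapTriangle.obj T).obj₁ ⟶ W) := h₁ W hW
    have : Subsingleton ((F.mapTriangle.obj T).obj₃ ⟶ W) := h₃ W hW
    refine subsingleton_of_forall_eq 0 fun f => ?_
    obtain ⟨g, rfl⟩ := Triangle.yoneda_exact₂ _ (F.map_distinguished T hT) f (Subsingleton.elim _ _)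
    rw [Subsingleton.elim g 0]
    exact comp_zero
  summand_mem A X s r hsr hX W hW :=
    have := hX W hW
    have : Epi (F.map r) := ((Retract.mk s r hsr).map F).splitEpi.epi
    ⟨fun f g => (cancel_epi (F.map r)).1 (Subsingleton.elim _ _)⟩
  tensor_right_mem Z B hZ W hW := by
    obtain ⟨_⟩ := hC.compact_rigid_right (F.obj B) ((hF _).mp (F.obj_mem_essImage B))
    have := hZ _ (h_tensorRight W hW (F.obj B)ᘁ)
    exact (((Functor.Monoidal.μIso F Z B).symm.homCongr (Iso.refl W)).trans
      (tensorRightHomEquiv (F.obj Z) (F.obj B) (F.obj B)ᘁ W)).subsingleton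
  tensor_left_mem Z B hZ W hW := by
    obtain ⟨_⟩ := hC.compact_rigid_left (F.obj B) ((hF _).mp (F.obj_mem_essImage B))
    have := hZ _ (h_tensorLeft W hW (ᘁ(F.obj B)))
    exact (((Functor.Monoidal.μIso F B Z).symm.homCongr (Iso.refl W)).trans
      (tensorLeftHomEquiv (F.obj Z) (ᘁ(F.obj B)) (F.obj B) W)).subsingleton

end LeftOrthogonal

variable {C : Type u} [Category.{v} C] [HasZeroObject C] [Preadditive C] [HasShift C ℤ]
  [∀ n : ℤ, (shiftFunctor C n).Additive] [Pretriangulated C] [MonoidalCategory C]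
variable {K : Type u'} [Category.{v'} K] [HasZeroObject K] [Preadditive K] [HasShift K ℤ]
  [∀ n : ℤ, (shiftFunctor K n).Additive] [Pretriangulated K] [MonoidalCategory K]
variable (F : K ⥤ C) [F.Full] [F.Faithful] [F.CommShift ℤ] [F.IsTriangulated] [F.Monoidal]

/-- (a) For thick ideals `I₁, I₂` of the compact part `K` and objects `A, B` of `K`,
`L_{I₁}(A) ⊗ L_{I₂}(B)` lies in `⟨I₁, I₂⟩^⊥`; (b) if `I₁` and `I₂` are coprime, then
`L_{I₁}(A) ⊗ L_{I₂}(B) ≅ 0` for all objects `A, B` of the big category. -/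
theorem statement4
    (hC : IsCptGenMDC C) (hF : ∀ X : C, F.essImage X ↔ IsCompactObj C X)
    (I₁ I₂ : ThickIdeal K)
    (LD₁ : LocalizationData C (F.obj '' I₁.carrier))
    (LD₂ : LocalizationData C (F.obj '' I₂.carrier)) :
    (∀ A B : K, ∀ Z ∈ (thickIdealGenerated K (I₁.carrier ∪ I₂.carrier)).carrier,
      ∀ f : F.obj Z ⟶ LD₁.L (F.obj A) ⊗ LD₂.L (F.obj B), f = 0) ∧
    (Coprime K I₁ I₂ → ∀ A B : C, IsZero (LD₁.L A ⊗ LD₂.L B)) := by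
  let 𝒲 := rightOrthogonal F I₁ ∩ rightOrthogonal F I₂
  let T := leftOrthogonalIdeal hC F hF 𝒲
    (fun _ hW n => ⟨shift_mem_rightOrthogonal hW.1 n, shift_mem_rightOrthogonal hW.2 n⟩)
    (fun _ hW E => ⟨tensor_mem_rightOrthogonal_of_left hC hF hW.1 E,
      tensor_mem_rightOrthogonal_of_left hC hF hW.2 E⟩)
    (fun _ hW E => ⟨tensor_mem_rightOrthogonal_of_right hC hF hW.1 E,
      tensor_mem_rightOrthogonal_of_right hC hF hW.2 E⟩)
  have hT : (thickIdealGenerated K (I₁.carrier ∪ I₂.carrier)).carrier ⊆ T.carrier :=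
    thickIdealGenerated_le (Set.union_subset (fun Z hZ _ hW => hW.1 Z hZ)
      fun Z hZ _ hW => hW.2 Z hZ)
  have hL : ∀ A B : C, LD₁.L A ⊗ LD₂.L B ∈ 𝒲 := fun A B =>
    ⟨tensor_mem_rightOrthogonal_of_left hC hF
        (perpSet_subset_rightOrthogonal F I₁ (LD₁.L_mem A)) _,
      tensor_mem_rightOrthogonal_of_right hC hF
        (perpSet_subset_rightOrthogonal F I₂ (LD₂.L_mem B)) _⟩
  refine ⟨fun A B Z hZ f => (hT hZ _ (hL _ _)).elim f 0, fun hcop A B => ?_⟩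
  exact isZero_of_forall_subsingleton F hC hF fun Z =>
    hT (hcop ▸ Set.mem_univ Z) _ (hL A B)

end NVY
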